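/- For σ = s or σ = −s, the function f^{(p)}(σ;u) simplifies to f^{(p)}(±s; u) = e^{∓pu} ∏_{j=1}^{p} sinh((2s−j+1)λ), for all integers 0 ≤ p ≤ 2s and all u ∈ ℂ. -/

import Mathlib

open Finset Complex

/-- q-integer `[n] = sinh(nλ)/sinh(λ)` with `q = e^λ`. -/
noncomputable def sqint (lam : ℂ) (n : ℕ) : ℂ := Complex.sinh (n * lam) / Complex.sinh lam

/-- q-factorial. -/
noncomputable def sqfact (lam : ℂ) : ℕ → ℂ
  | 0 => 1
  | n + 1 => sqint lam (n + 1) * sqfact lam n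

/-- q-binomial coefficient `[m choose n]`, zero when `n > m`. -/
noncomputable def sqbinom (lam : ℂ) (m n : ℕ) : ℂ :=
  if n ≤ m then sqfact lam m / (sqfact lam (m - n) * sqfact lam n) else 0

/-- The function
`f^{(p)}(σ;u) = ∑_{k=0}^{p} (-e^{2λσ})^k [p choose k]_q
  ∏_{j=1}^{k} sinh(u+(j-1)λ) ∏_{j=k+1}^{p} sinh(u+(2s+j-p)λ)`,
where `s2 = 2s`. -/
noncomputable def ff (s2 : ℕ) (lam σ u : ℂ) (p : ℕ) : ℂ :=
  ∑ k ∈ range (p + 1),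
    (-Complex.exp (2 * lam * σ)) ^ k * sqbinom lam p k
      * (∏ j ∈ range k, Complex.sinh (u + (j : ℂ) * lam))
      * (∏ j ∈ Finset.Ico k p, Complex.sinh (u + ((s2 : ℂ) + (j : ℂ) + 1 - (p : ℂ)) * lam))

/-! The proof is an induction on `p`. For `σ = εs` the q-Pascal rule
`[p+1, k+1] = e^{ε(k+1)λ} [p, k+1] + e^{-ε(p-k)λ} [p, k]` splits `f^{(p+1)}` into two sums;
after shifting the index of one of them they recombine termwise through
`e^{εaλ} sinh(u + bλ) - e^{εbλ} sinh(u + aλ) = e^{-εu} sinh((b - a)λ)`,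
giving `f^{(p+1)} = e^{-εu} sinh((2s - p)λ) f^{(p)}`.
This needs the q-factorial `[p+1]!` to be nonzero. If `[p]! = 0`, then `sinh(nλ) = 0` for some
`1 ≤ n ≤ p`, and both sides vanish: every q-binomial `[p, k]` has numerator `[p]! = 0`, and among
the `p` consecutive integers `2s - j` (`j < p`) one is a multiple of `n`. -/

theorem sinh_add_eq_exp_mul_sinh_add {ε : ℂ} (hε : ε = 1 ∨ ε = -1) (a b : ℂ) :
    sinh (a + b) = exp (ε * b) * sinh a + exp (-(ε * a)) * sinh b := by
  rcases hε with rfl | rfl <;>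
  · simp only [Complex.sinh, mul_sub, mul_div_assoc', ← exp_add]
    ring_nf

theorem exp_mul_sinh_add_sub_exp_mul_sinh_add {ε : ℂ} (hε : ε = 1 ∨ ε = -1) (lam u a b : ℂ) :
    exp (ε * a * lam) * sinh (u + b * lam) - exp (ε * b * lam) * sinh (u + a * lam)
      = exp (-(ε * u)) * sinh ((b - a) * lam) := by
  rcases hε with rfl | rfl <;>
  · simp only [Complex.sinh, mul_sub, mul_div_assoc', ← exp_add]
    ring_nf

theorem sinh_nat_mul_eq_zero {z : ℂ} (hz : sinh z = 0) (n : ℕ) : sinh (n * z) = 0 := by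
  have hexp : exp z = exp (-z) := by
    simp only [Complex.sinh] at hz
    linear_combination 2 * hz
  simp only [Complex.sinh, ← mul_neg, exp_nat_mul, hexp, sub_self, zero_div]

theorem sqint_add {ε : ℂ} (hε : ε = 1 ∨ ε = -1) (lam : ℂ) (m n : ℕ) :
    sqint lam (m + n) = exp (ε * n * lam) * sqint lam m + exp (-(ε * m * lam)) * sqint lam n := by
  simp only [sqint, Nat.cast_add, add_mul,
    sinh_add_eq_exp_mul_sinh_add hε (m * lam) (n * lam), mul_assoc]
  ring

theorem sqfact_eq_prod (lam : ℂ) (n : ℕ) : sqfact lam n = ∏ j ∈ range n, sqint lam (j + 1) := by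
  induction n with
  | zero => rfl
  | succ n ih => rw [sqfact, ih, prod_range_succ, mul_comm]

theorem sqfact_ne_zero_of_le {lam : ℂ} {m n : ℕ} (hmn : m ≤ n) (hn : sqfact lam n ≠ 0) :
    sqfact lam m ≠ 0 := by
  rw [sqfact_eq_prod, prod_ne_zero_iff] at hn ⊢
  exact fun j hj => hn j (mem_range.2 ((mem_range.1 hj).trans_le hmn))

theorem sqint_ne_zero_of_le {lam : ℂ} {m n : ℕ} (hm : 0 < m) (hmn : m ≤ n) (hn : sqfact lam n ≠ 0) :
    sqint lam m ≠ 0 := by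
  rw [sqfact_eq_prod, prod_ne_zero_iff] at hn
  obtain ⟨j, rfl⟩ := Nat.exists_eq_succ_of_ne_zero hm.ne'
  exact hn j (mem_range.2 (by omega))

theorem sqbinom_zero_right {lam : ℂ} {n : ℕ} (hn : sqfact lam n ≠ 0) : sqbinom lam n 0 = 1 := by
  rw [sqbinom, if_pos n.zero_le, Nat.sub_zero, sqfact, mul_one, div_self hn]

theorem sqbinom_self {lam : ℂ} {n : ℕ} (hn : sqfact lam n ≠ 0) : sqbinom lam n n = 1 := by
  rw [sqbinom, if_pos le_rfl, Nat.sub_self, sqfact, one_mul, div_self hn]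

theorem sqbinom_of_lt {lam : ℂ} {n k : ℕ} (hnk : n < k) : sqbinom lam n k = 0 :=
  if_neg hnk.not_ge

theorem sqbinom_eq_zero_of_sqfact_eq_zero {lam : ℂ} {n : ℕ} (hn : sqfact lam n = 0) (k : ℕ) :
    sqbinom lam n k = 0 := by
  unfold sqbinom
  split_ifs <;> simp [hn]

theorem sqbinom_succ_succ {ε : ℂ} (hε : ε = 1 ∨ ε = -1) {lam : ℂ} {p k : ℕ} (hkp : k ≤ p)
    (hp : sqfact lam (p + 1) ≠ 0) :
    sqbinom lam (p + 1) (k + 1)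
      = exp (ε * (k + 1) * lam) * sqbinom lam p (k + 1)
        + exp (-(ε * (p - k) * lam)) * sqbinom lam p k := by
  rcases hkp.eq_or_lt with rfl | hkp
  · rw [sqbinom_self hp, sqbinom_of_lt k.lt_succ_self,
      sqbinom_self (sqfact_ne_zero_of_le k.le_succ hp)]
    simp
  · obtain ⟨r, rfl⟩ := Nat.exists_eq_add_of_lt hkp
    have hr := sqint_ne_zero_of_le r.succ_pos (by omega) hp
    have hk := sqint_ne_zero_of_le k.succ_pos (by omega) hp
    simp only [sqbinom, if_pos (show k + 1 ≤ k + r + 1 + 1 by omega),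
      if_pos (show k + 1 ≤ k + r + 1 by omega), if_pos (show k ≤ k + r + 1 by omega),
      show k + r + 1 + 1 - (k + 1) = r + 1 by omega, show k + r + 1 - (k + 1) = r by omega,
      show k + r + 1 - k = r + 1 by omega, sqfact]
    rw [show k + r + 1 + 1 = r + 1 + (k + 1) by omega, sqint_add hε lam (r + 1) (k + 1)]
    field_simp
    push_cast
    ring_nf

theorem prod_Ico_succ_succ_sinh (c lam u : ℂ) (k p : ℕ) :
    ∏ j ∈ Ico (k + 1) (p + 1), sinh (u + (c + j + 1 - ((p + 1 : ℕ) : ℂ)) * lam)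
      = ∏ j ∈ Ico k p, sinh (u + (c + j + 1 - p) * lam) := by
  rw [← prod_Ico_add']
  refine prod_congr rfl fun j _ => ?_
  push_cast
  ring_nf

theorem prod_Ico_succ_right_sinh (c lam u : ℂ) {k p : ℕ} (hkp : k ≤ p) :
    ∏ j ∈ Ico k (p + 1), sinh (u + (c + j + 1 - ((p + 1 : ℕ) : ℂ)) * lam)
      = sinh (u + (c + k - p) * lam) * ∏ j ∈ Ico k p, sinh (u + (c + j + 1 - p) * lam) := by
  rw [prod_eq_prod_Ico_succ_bot (by omega), prod_Ico_succ_succ_sinh]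
  push_cast
  ring_nf

noncomputable def ffTerm (s2 : ℕ) (lam σ u : ℂ) (p k : ℕ) : ℂ :=
  (-exp (2 * lam * σ)) ^ k * sqbinom lam p k * (∏ j ∈ range k, sinh (u + j * lam))
    * ∏ j ∈ Ico k p, sinh (u + (s2 + j + 1 - p) * lam)

theorem ff_eq_sum_ffTerm (s2 : ℕ) (lam σ u : ℂ) (p : ℕ) :
    ff s2 lam σ u p = ∑ k ∈ range (p + 1), ffTerm s2 lam σ u p k := rfl

theorem ff_succ {ε : ℂ} (hε : ε = 1 ∨ ε = -1) (s2 : ℕ) (lam u : ℂ) {p : ℕ}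
    (hp : sqfact lam (p + 1) ≠ 0) :
    ff s2 lam (ε * s2 / 2) u (p + 1)
      = exp (-(ε * u)) * sinh ((s2 - p) * lam) * ff s2 lam (ε * s2 / 2) u p := by
  let T := ffTerm s2 lam (ε * s2 / 2) u
  let w := -exp (2 * lam * (ε * s2 / 2))
  let A : ℕ → ℂ := fun k => ∏ j ∈ range k, sinh (u + j * lam)
  let B : ℕ → ℂ := fun k => ∏ j ∈ Ico k (p + 1), sinh (u + (s2 + j + 1 - ((p + 1 : ℕ) : ℂ)) * lam)
  let g : ℕ → ℂ := fun k => w ^ k * exp (ε * k * lam) * sqbinom lam p k * A k * B k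
  let h : ℕ → ℂ := fun k =>
    w ^ (k + 1) * exp (-(ε * (p - k) * lam)) * sqbinom lam p k * A (k + 1) * B (k + 1)
  have hg_zero : T (p + 1) 0 = g 0 := by
    simp [T, g, A, B, ffTerm, sqbinom_zero_right hp,
      sqbinom_zero_right (sqfact_ne_zero_of_le p.le_succ hp)]
  have hg_top : g (p + 1) = 0 := by simp [g, sqbinom_of_lt p.lt_succ_self]
  have hpascal : ∀ k ∈ range (p + 1), T (p + 1) (k + 1) = g (k + 1) + h k := by
    intro k hk
    simp only [T, g, h, A, B, ffTerm, sqbinom_succ_succ hε (mem_range_succ_iff.1 hk) hp]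
    push_cast
    ring
  have hcombine : ∀ k ∈ range (p + 1),
      g k + h k = exp (-(ε * u)) * sinh ((s2 - p) * lam) * T p k := by
    intro k hk
    have hw : exp (2 * lam * (ε * s2 / 2)) * exp (-(ε * (p - k) * lam))
        = exp (ε * (s2 + k - p) * lam) := by
      rw [← exp_add]; ring_nf
    have hsinh := exp_mul_sinh_add_sub_exp_mul_sinh_add hε lam u k (s2 + k - p)
    rw [show ((s2 : ℂ) + k - p - k) = s2 - p by ring] at hsinh
    simp only [T, g, h, A, B, ffTerm, prod_Ico_succ_right_sinh _ _ _ (mem_range_succ_iff.1 hk),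
      prod_Ico_succ_succ_sinh, prod_range_succ]
    linear_combination (w ^ k * sqbinom lam p k * (∏ j ∈ range k, sinh (u + j * lam))
      * ∏ j ∈ Ico k p, sinh (u + (s2 + j + 1 - p) * lam)) * (hsinh - sinh (u + k * lam) * hw)
  calc ff s2 lam (ε * s2 / 2) u (p + 1)
      = T (p + 1) 0 + ∑ k ∈ range (p + 1), T (p + 1) (k + 1) := by
        rw [ff_eq_sum_ffTerm, sum_range_succ', add_comm]
    _ = g 0 + ∑ k ∈ range (p + 1), (g (k + 1) + h k) := by rw [hg_zero, sum_congr rfl hpascal]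
    _ = ∑ k ∈ range (p + 1), (g k + h k) := by
        rw [sum_add_distrib, sum_add_distrib, ← add_assoc, add_comm (g 0), ← sum_range_succ' g,
          sum_range_succ g (p + 1), hg_top, add_zero]
    _ = _ := by rw [sum_congr rfl hcombine, ← mul_sum, ff_eq_sum_ffTerm]

theorem ff_eq_of_sqfact_ne_zero {ε : ℂ} (hε : ε = 1 ∨ ε = -1) (s2 : ℕ) (lam u : ℂ) {p : ℕ}
    (hp : sqfact lam p ≠ 0) :
    ff s2 lam (ε * s2 / 2) u p = exp (-ε * p * u) * ∏ j ∈ range p, sinh ((s2 - j) * lam) := by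
  induction p with
  | zero => simp [ff, sqbinom, sqfact]
  | succ p ih =>
    rw [ff_succ hε s2 lam u hp, ih (sqfact_ne_zero_of_le p.le_succ hp), prod_range_succ,
      show -ε * ((p + 1 : ℕ) : ℂ) * u = -(ε * u) + -ε * p * u by push_cast; ring, exp_add]
    ring

theorem ff_eq_zero_of_sqfact_eq_zero (s2 : ℕ) {lam : ℂ} (σ u : ℂ) {p : ℕ} (hp : sqfact lam p = 0) :
    ff s2 lam σ u p = 0 :=
  sum_eq_zero fun k _ => by simp [sqbinom_eq_zero_of_sqfact_eq_zero hp]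

theorem exists_sinh_nat_mul_eq_zero_of_sqfact_eq_zero {lam : ℂ} {p : ℕ} (hp : sqfact lam p = 0) :
    ∃ n, 0 < n ∧ n ≤ p ∧ sinh (n * lam) = 0 := by
  rw [sqfact_eq_prod, prod_eq_zero_iff] at hp
  obtain ⟨m, hm, hm0⟩ := hp
  rcases div_eq_zero_iff.1 hm0 with h | h
  · exact ⟨m + 1, m.succ_pos, mem_range.1 hm, h⟩
  · exact ⟨1, one_pos, by simp at hm; omega, by simpa using h⟩

theorem prod_range_sinh_sub_mul_eq_zero (s2 : ℕ) {lam : ℂ} {n p : ℕ} (hn : 0 < n) (hnp : n ≤ p)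
    (hsinh : sinh (n * lam) = 0) : ∏ j ∈ range p, sinh ((s2 - j) * lam) = 0 := by
  refine prod_eq_zero (mem_range.2 ((s2.mod_lt hn).trans_le hnp)) ?_
  have hdiv : ((s2 : ℂ) - (s2 % n : ℕ)) * lam = (s2 / n : ℕ) * (n * lam) := by
    rw [← Nat.cast_sub (s2.mod_le n), ← Nat.mul_div_self_eq_mod_sub_self]
    push_cast
    ring
  rw [hdiv, sinh_nat_mul_eq_zero hsinh]

theorem f_simplification_general (s2 : ℕ) (lam : ℂ)
    (ε : ℂ) (hε : ε = 1 ∨ ε = -1) (u : ℂ) (p : ℕ) :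
    ff s2 lam (ε * (s2 : ℂ) / 2) u p
      = Complex.exp (-ε * (p : ℂ) * u)
          * ∏ j ∈ range p, Complex.sinh (((s2 : ℂ) - (j : ℂ)) * lam) := by
  by_cases hp : sqfact lam p = 0
  · obtain ⟨n, hn, hnp, hsinh⟩ := exists_sinh_nat_mul_eq_zero_of_sqfact_eq_zero hp
    rw [ff_eq_zero_of_sqfact_eq_zero s2 _ u hp, prod_range_sinh_sub_mul_eq_zero s2 hn hnp hsinh, mul_zero]
  · exact ff_eq_of_sqfact_ne_zero hε s2 lam u hp

/-- For `σ = ±s`, the function simplifies: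
`f^{(p)}(±s;u) = e^{∓pu} ∏_{j=1}^{p} sinh((2s−j+1)λ)` for `0 ≤ p ≤ 2s`. -/
theorem f_simplification (s2 : ℕ) (hs2 : 1 ≤ s2) (lam : ℂ) (hlam : Complex.sinh lam ≠ 0)
    (ε : ℂ) (hε : ε = 1 ∨ ε = -1) (u : ℂ) (p : ℕ) (hp : p ≤ s2) :
    ff s2 lam (ε * (s2 : ℂ) / 2) u p
      = Complex.exp (-ε * (p : ℂ) * u)
          * ∏ j ∈ range p, Complex.sinh (((s2 : ℂ) - (j : ℂ)) * lam) :=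
  f_simplification_general s2 lam ε hε u p
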